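/- Let β, β' ∈ ℝ/ℤ, let n ≥ 1, and let x, y ∈ ℝ/ℤ with x = y + z (mod 1) for some real z with α_{n+1} ≤ z ≤ α_n. Suppose β lies in the half-open arc [y, x) (that is, (β − y) mod 1 < z). Then there is a smallest integer k > 0 such that β' lies in the half-open arc [R^k y, R^k x) (that is, (β' − R^k y) mod 1 < z), and this k is at most q_{n+2} + q_{n+1} + q_n. -/

import Mathlib

open MeasureTheory Filter Set
open scoped ENNReal symmDiff Classical

noncomputable section

/-! ### Generic measurable dynamics -/

/-- `(X, T, μ)` is rigid: for some sequence `q n → ∞`, `μ (T^[q n] '' A ∆ A) → 0`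
for every measurable set `A`. -/
def Rigid {X : Type*} [MeasurableSpace X] (T : X → X) (μ : Measure X) : Prop :=
  ∃ q : ℕ → ℕ, Tendsto q atTop atTop ∧
    ∀ A : Set X, MeasurableSet A →
      Tendsto (fun n => μ (((T^[q n]) '' A) ∆ A)) atTop (nhds 0)

/-- `T` is uniquely ergodic: it admits exactly one invariant Borel probability measure. -/
def UniquelyErgodicMap {X : Type*} [MeasurableSpace X] (T : X → X) : Prop :=
  ∃! μ : Measure X, IsProbabilityMeasure μ ∧ MeasurePreserving T μ μ

/-- `(X, T, μ)` is of rank one. -/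
def RankOne {X : Type*} [MeasurableSpace X] (T : X → X) (μ : Measure X) : Prop :=
  ∃ F : ℕ → Set X, ∃ h : ℕ → ℕ, (∀ n, 1 ≤ h n) ∧ (∀ n, MeasurableSet (F n)) ∧
    (∀ n, ∀ i < h n, ∀ j < h n, i ≠ j → Disjoint ((T^[i]) '' F n) ((T^[j]) '' F n)) ∧
    ∀ A : Set X, MeasurableSet A → ∀ ε : ℝ≥0∞, 0 < ε → ∃ n : ℕ, ∃ s : Finset ℕ, ∃ rem : Bool,
      (∀ i ∈ s, i < h n) ∧
      μ (A ∆ ((⋃ i ∈ s, (T^[i]) '' F n) ∪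
        (if rem then (⋃ i ∈ Finset.range (h n), (T^[i]) '' F n)ᶜ else (∅ : Set X)))) < ε

/-! ### Words, languages, symbolic systems -/

/-- `w` is a factor of `v`. -/
def IsFactor {A : Type*} (w v : List A) : Prop := ∃ u u' : List A, v = u ++ w ++ u'

/-- `L` is a language: nonempty, closed under factors, and every word extends to a longer one. -/
def IsLanguage {A : Type*} (L : Set (List A)) : Prop :=
  L.Nonempty ∧ (∀ v ∈ L, ∀ w : List A, IsFactor w v → w ∈ L) ∧
    (∀ w ∈ L, ∃ v ∈ L, w.length < v.length ∧ IsFactor w v)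

/-- `L` is linearly recurrent: for some `K`, every word of length `n` occurs in
every word of length at least `K n`. -/
def LinearlyRecurrent {A : Type*} (L : Set (List A)) : Prop :=
  ∃ K : ℕ, 1 ≤ K ∧ ∀ w ∈ L, ∀ v ∈ L, K * w.length ≤ v.length → IsFactor w v

/-- `L` is minimal. -/
def MinimalLang {A : Type*} (L : Set (List A)) : Prop :=
  ∀ w ∈ L, ∃ n : ℕ, ∀ v ∈ L, v.length = n → IsFactor w v

/-- The factor of a sequence starting at `i`, of length `s`. -/
def wordAt {A : Type*} (x : ℕ → A) (i s : ℕ) : List A := List.ofFn fun j : Fin s => x (i + j)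

/-- The subshift `X_L`: sequences all of whose finite factors lie in `L`. -/
def XL {A : Type*} (L : Set (List A)) : Set (ℕ → A) := {x | ∀ i s : ℕ, wordAt x i s ∈ L}

/-- The one-sided shift `S` on `X_L`. -/
def shiftXL {A : Type*} (L : Set (List A)) (x : XL L) : XL L :=
  ⟨fun n => x.1 (n + 1), fun i s => by
    have h := x.2 (i + 1) s
    have e : wordAt (fun n => x.1 (n + 1)) i s = wordAt x.1 (i + 1) s := by
      unfold wordAt
      refine congrArg List.ofFn (funext fun j => congrArg x.1 ?_)
      omega
    rw [e]
    exact h⟩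

/-- The cylinder `[w] ⊆ X_L` of a word `w`. -/
def langCylinder {A : Type*} (L : Set (List A)) (w : List A) : Set (XL L) :=
  {x | ∀ i : Fin w.length, x.1 i = w.get i}

/-- `e_n(S, μ)`: the smallest positive measure of a cylinder of a word of `L` of length `n`. -/
def cylMinMeasure {A : Type*} [MeasurableSpace A] (L : Set (List A))
    (μ : Measure (XL L)) (n : ℕ) : ℝ≥0∞ :=
  sInf {v : ℝ≥0∞ | ∃ w ∈ L, w.length = n ∧ v = μ (langCylinder L w) ∧ 0 < v}

/-! ### Continued fraction data of `α` -/

/-- `ℤ + αℤ`. -/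
def ZPlusAlphaZ (α : ℝ) : Set ℝ := {x | ∃ m k : ℤ, x = (m : ℝ) + (k : ℝ) * α}

/-- `(α_{n-1}, α_n)` computed by the Euclidean algorithm, with `α_{-1} = 1`, `α_0 = α`. -/
def cfPair (α : ℝ) : ℕ → ℝ × ℝ
  | 0 => (1, α)
  | n + 1 =>
    ((cfPair α n).2, (cfPair α n).1 - (⌊(cfPair α n).1 / (cfPair α n).2⌋ : ℝ) * (cfPair α n).2)

/-- `α_n = |q_n α - p_n|`. -/
def alphaSeq (α : ℝ) (n : ℕ) : ℝ := (cfPair α n).2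

/-- The partial quotient `a_n = ⌊α_{n-2} / α_{n-1}⌋` (meaningful for `n ≥ 1`). -/
def pq (α : ℝ) (n : ℕ) : ℕ := (⌊(cfPair α (n - 1)).1 / (cfPair α (n - 1)).2⌋).toNat

/-- `(q_{n-1}, q_n)`, with `q_{-1} = 0`, `q_0 = 1` and `q_{n+1} = a_{n+1} q_n + q_{n-1}`. -/
def qPair (α : ℝ) : ℕ → ℕ × ℕ
  | 0 => (0, 1)
  | n + 1 => ((qPair α n).2, pq α (n + 1) * (qPair α n).2 + (qPair α n).1)

/-- `q_n`. -/
def qDen (α : ℝ) (n : ℕ) : ℕ := (qPair α n).2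

/-- `α` has bounded partial quotients. -/
def BoundedPartialQuotients (α : ℝ) : Prop := ∃ C : ℕ, ∀ n : ℕ, 1 ≤ n → pq α n ≤ C

/-! ### Rokhlin towers for the rotation and Ostrowski digits -/

/-- `x` lies in the arc `[a, a + l)` modulo 1. -/
def inArc (x a l : ℝ) : Prop := ∃ m : ℤ, a ≤ x + m ∧ x + m < a + l

/-- Left endpoint of the basis `B_n` of the large `n`-tower. -/
def largeBase (α : ℝ) (n : ℕ) : ℝ :=
  if Odd n then α - alphaSeq α (n - 1) + alphaSeq α n else α - alphaSeq α n

/-- Left endpoint of the basis `B'_n` of the small `n`-tower. -/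
def smallBase (α : ℝ) (n : ℕ) : ℝ :=
  if Odd n then α - alphaSeq α (n - 1) else α + alphaSeq α (n - 1) - alphaSeq α n

/-- Membership in the basis `B_n` of the large `n`-tower. -/
def InLargeBase (α : ℝ) (n : ℕ) (x : ℝ) : Prop := inArc x (largeBase α n) (alphaSeq α (n - 1))

/-- Distance from `x` to the reference endpoint (left endpoint for `n` odd, right
endpoint for `n` even) of the level `k` of the large `n`-tower. -/
def levelDist (α : ℝ) (n k : ℕ) (x : ℝ) : ℝ :=
  if Odd n then x - (largeBase α n + (k : ℝ) * α)
  else (largeBase α n + alphaSeq α (n - 1) + (k : ℝ) * α) - x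

/-- `x` lies in column `(b)` of the large `n`-tower. -/
def InLargeColumn (α : ℝ) (n b : ℕ) (x : ℝ) : Prop :=
  ∃ k : ℕ, k < qDen α n ∧
    inArc (levelDist α n k x) ((b : ℝ) * alphaSeq α n)
      (if b = pq α (n + 1) then alphaSeq α (n - 1) - (pq α (n + 1) : ℝ) * alphaSeq α n
       else alphaSeq α n)

/-- `x` lies in the small `n`-tower. -/
def InSmallTower (α : ℝ) (n : ℕ) (x : ℝ) : Prop :=
  ∃ k : ℕ, k < (qPair α n).1 ∧ inArc x (smallBase α n + (k : ℝ) * α) (alphaSeq α n)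

/-- The Ostrowski digit `b_m(β)` (meaningful for `m ≥ 2`), read in the towers at stage `m - 1`:
it is `b` if `β` lies in column `(b)` of the large `(m-1)`-tower with `b ≥ 1`, and `0`
otherwise. -/
def ostB (α β : ℝ) (m : ℕ) : ℕ :=
  if h : ∃ b : ℕ, 1 ≤ b ∧ InLargeColumn α (m - 1) b β then h.choose else 0

/-! ### Isolation and clustering of marked points -/

/-- The marked point `β_j` (with `β_j ≠ 1 - α`) is `(n, M)`-isolated. -/
def BetaIsolated {r : ℕ} (α : ℝ) (β : Fin r → ℝ) (j : Fin r) (n M : ℕ) : Prop :=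
  (∃ m₁ : ℕ, n - M ≤ m₁ ∧ m₁ ≤ n ∧ ostB α (β j) m₁ ≠ pq α m₁ - 1) ∧
  (∃ m₂ : ℕ, n - M ≤ m₂ ∧ m₂ ≤ n ∧ Odd m₂ ∧ ostB α (β j) m₂ ≠ pq α m₂) ∧
  (∃ m₃ : ℕ, n - M ≤ m₃ ∧ m₃ ≤ n ∧ Even m₃ ∧ ostB α (β j) m₃ ≠ pq α m₃) ∧
  ∀ i : Fin r, i ≠ j → β i ≠ 1 - α →
    ∃ m' : ℕ, n - M ≤ m' ∧ m' ≤ n ∧ ostB α (β j) m' ≠ ostB α (β i) m'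

/-- The point `α` is `(n, M)`-isolated. -/
def AlphaIsolated {r : ℕ} (α : ℝ) (β : Fin r → ℝ) (n M : ℕ) : Prop :=
  ∀ i : Fin r, β i ≠ 1 - α →
    (∃ m : ℕ, n - M ≤ m ∧ m ≤ n ∧ ostB α (β i) m ≠ pq α m - 1) ∧
    (∃ m' : ℕ, n - M ≤ m' ∧ m' ≤ n ∧ Odd m' ∧ ostB α (β i) m' ≠ pq α m') ∧
    (∃ m'' : ℕ, n - M ≤ m'' ∧ m'' ≤ n ∧ Even m'' ∧ ostB α (β i) m'' ≠ pq α m'')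

/-- All the marked points `β_i` (with `β_i ≠ 1 - α`) cluster on `α`. -/
def ClusterOnAlpha {r : ℕ} (α : ℝ) (β : Fin r → ℝ) : Prop :=
  ∃ m N : ℕ → ℕ, Tendsto m atTop atTop ∧ Tendsto N atTop atTop ∧
    (∀ k : ℕ, m k + N k < m (k + 1)) ∧
    ∀ k : ℕ, ∀ i : Fin r, β i ≠ 1 - α →
      (∀ n, m k ≤ n → n ≤ m k + N k → ostB α (β i) n = pq α n - 1) ∨
      (∀ n, m k ≤ n → n ≤ m k + N k → Even n → ostB α (β i) n = pq α n) ∨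
      (∀ n, m k ≤ n → n ≤ m k + N k → Odd n → ostB α (β i) n = pq α n)

/-! ### The generalized Veech–Sataev system -/

instance : Fact ((0 : ℝ) < 1) := ⟨zero_lt_one⟩

/-- The representative in `[0, 1)` of a point of the circle `ℝ/ℤ`. -/
def circleRepr (x : AddCircle (1 : ℝ)) : ℝ := (AddCircle.equivIco 1 0 x).1

/-- The rotation `R` of angle `α` on the circle. -/
def rotMap (α : ℝ) : AddCircle (1 : ℝ) → AddCircle (1 : ℝ) := fun x => x + (α : AddCircle (1 : ℝ))

/-- The index `j ∈ {0, …, r}` such that `β_j ≤ x < β_{j+1}` (with `β_0 = 0`,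
`β_{r+1} = 1`), i.e. the number of marked points `≤ x`. -/
def atomIdx {r : ℕ} (β : Fin r → ℝ) (x : ℝ) : Fin (r + 1) :=
  ⟨(Finset.univ.filter fun i => β i ≤ x).card,
    Nat.lt_succ_of_le (le_trans (Finset.card_filter_le _ _) (by simp))⟩

/-- The permutation `σ(x)`. -/
def sigmaOf {r d : ℕ} (β : Fin r → ℝ) (σ : Fin (r + 1) → Equiv.Perm (Fin d)) (x : ℝ) :
    Equiv.Perm (Fin d) := σ (atomIdx β x)

/-- The generalized Veech–Sataev map `T(x, s) = (Rx, σ(x) s)` on `(ℝ/ℤ) × {1, …, d}`. -/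
def VST {r d : ℕ} (α : ℝ) (β : Fin r → ℝ) (σ : Fin (r + 1) → Equiv.Perm (Fin d)) :
    AddCircle (1 : ℝ) × Fin d → AddCircle (1 : ℝ) × Fin d :=
  fun p => (rotMap α p.1, sigmaOf β σ (circleRepr p.1) p.2)

/-- Standing conditions on the marked points `β_1 < … < β_r`. -/
def MarkedPointsCond {r : ℕ} (α : ℝ) (β : Fin r → ℝ) : Prop :=
  (∀ i : Fin r, Irrational (β i) ∧ 0 < β i ∧ β i < 1) ∧
  StrictMono β ∧
  (∀ i : Fin r, β i ≠ 1 - α → β i ∉ ZPlusAlphaZ α) ∧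
  (∀ i j : Fin r, i ≠ j → β i ≠ 1 - α → β j ≠ 1 - α → β i - β j ∉ ZPlusAlphaZ α)

/-- Adjacent permutations are distinct: `σ_j ≠ σ_{j+1}` for `0 ≤ j ≤ r - 1`. -/
def SigmaAdjacentCond {r d : ℕ} (σ : Fin (r + 1) → Equiv.Perm (Fin d)) : Prop :=
  ∀ j : Fin r, σ j.castSucc ≠ σ j.succ

/-- The minimality condition: no nonempty proper subset of `{1, …, d}` is invariant
under all the `σ_i`. -/
def MinimalityCondition {r d : ℕ} (σ : Fin (r + 1) → Equiv.Perm (Fin d)) : Prop :=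
  ¬ ∃ A : Set (Fin d), A.Nonempty ∧ A ≠ Set.univ ∧ ∀ j : Fin (r + 1), (σ j) '' A = A

/-- The product inequality. -/
def ProductInequality {r d : ℕ} (α : ℝ) (β : Fin r → ℝ)
    (σ : Fin (r + 1) → Equiv.Perm (Fin d)) : Prop :=
  (∀ t : Fin r, β t = 1 - α → σ (Fin.last r) * σ t.castSucc ≠ σ 0 * σ t.succ) ∧
  ((∀ i : Fin r, β i ≠ 1 - α) → σ (Fin.last r) ≠ σ 0)

/-! ### Codings -/

/-- The letter read by the rotation with marked points at time `i`. -/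
def rotCode {r : ℕ} (α : ℝ) (β : Fin r → ℝ) (x : AddCircle (1 : ℝ)) (i : ℕ) : Fin (r + 1) :=
  atomIdx β (circleRepr ((rotMap α)^[i] x))

/-- The language `L'` of the rotation with marked points `β_1, …, β_r`. -/
def LRot {r : ℕ} (α : ℝ) (β : Fin r → ℝ) : Set (List (Fin (r + 1))) :=
  {w | ∃ x : AddCircle (1 : ℝ), ∀ i : Fin w.length, w.get i = rotCode α β x i.1}

/-- The letter of the natural coding of `T` at a point. -/
def vsCode {r d : ℕ} (β : Fin r → ℝ) (p : AddCircle (1 : ℝ) × Fin d) : Fin (r + 1) × Fin d :=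
  (atomIdx β (circleRepr p.1), p.2)

/-- The language `L(T)` of the natural coding of the generalized Veech–Sataev system. -/
def LVST {r d : ℕ} (α : ℝ) (β : Fin r → ℝ) (σ : Fin (r + 1) → Equiv.Perm (Fin d)) :
    Set (List (Fin (r + 1) × Fin d)) :=
  {w | ∃ p : AddCircle (1 : ℝ) × Fin d,
    ∀ i : Fin w.length, w.get i = vsCode β ((VST α β σ)^[i.1] p)}

/-- Bounded runs: there is a bound on the number of consecutive integers satisfying `P`. -/
def BoundedRun (P : ℕ → Prop) : Prop :=
  ∃ B : ℕ, ∀ m : ℕ, ∃ n : ℕ, m ≤ n ∧ n ≤ m + B ∧ ¬ P n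

end

/-! At stage `m` of the continued fraction expansion the circle is covered by two Rokhlin towers
of the rotation: the large one, whose levels are the arcs of length `α_{m-1}` at the points `kα`,
`k < q_m`, and the small one, whose levels are the arcs of length `α_m` at `kα`, `k < q_{m-1}`,
oriented to the right or to the left of `kα` according to the parity of `m`. Since
`α_{m-1} = a_{m+1} α_m + α_{m+1}` and `q_m α`, `q_{m-1} α` are `±α_m`, `∓α_{m-1}` mod `1`,
cutting every level of the large tower into `a_{m+1}` arcs of length `α_m` and one of length
`α_{m+1}` yields the two towers of stage `m + 1`, with the orientation reversed. Hence every point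
has one of the points `kα`, `0 ≤ k < q_{m+1} + q_m`, within `α_m` to its left; for `m = n + 1`
this is the bound `q_{n+2} + q_{n+1}` on the first return to an arc of length `z ≥ α_{n+1}`. -/

/-- For `σ = 1`: `c` lies in one of the arcs `[kα, kα + L)` with `k < Q` (the large tower) or
`(kα - S, kα]` with `k < Q'` (the small tower); `σ = -1` reflects all these arcs. -/
def InTwoTowers (α σ c : ℝ) (Q Q' : ℕ) (L S : ℝ) : Prop :=
  (∃ k < Q, Int.fract (σ * (c - k * α)) < L) ∨
    (∃ k < Q', 1 - S ≤ Int.fract (σ * (c - k * α)))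

namespace InTwoTowers

variable {α σ c L S T : ℝ} {Q Q' a : ℕ}

lemma succ_of_large (hS : 0 < S) (hS1 : S < 1) (ha : 1 ≤ a) (hL : L = a * S + T)
    (hQ' : ∃ p : ℤ, σ * (Q' * α) = p + L) (hQ : ∃ p : ℤ, σ * (Q * α) = p - S)
    {k : ℕ} (hk : k < Q) (ht : Int.fract (σ * (c - k * α)) < L) :
    InTwoTowers α (-σ) c (a * Q + Q') Q S T := by
  set x := σ * (c - k * α) with hx
  have hneg : -σ * (c - k * α) = -x := by ring
  have hQle : Q ≤ a * Q + Q' := by nlinarith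
  rcases (Int.fract_nonneg x).eq_or_lt with h0 | h0
  · refine .inl ⟨k, by omega, ?_⟩
    rwa [hneg, Int.fract_neg_eq_zero.2 h0.symm]
  by_cases hT : Int.fract x ≤ T
  · refine .inr ⟨k, hk, ?_⟩
    rw [hneg, Int.fract_neg h0.ne']
    linarith
  obtain ⟨p', hp'⟩ := hQ'
  obtain ⟨p, hp⟩ := hQ
  -- cut the level `[0, L)` into pieces of length `S` from its right end; `fract x` lies in the
  -- `j`-th one, which is a level of the large tower of the next stage
  set j := ⌊(L - Int.fract x) / S⌋₊
  have hj : j * S ≤ L - Int.fract x :=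
    (le_div_iff₀ hS).1 (Nat.floor_le (div_nonneg (by linarith) hS.le))
  have hj' : L - Int.fract x < (j + 1) * S := (div_lt_iff₀ hS).1 (Nat.lt_floor_add_one _)
  have hja : j < a := by
    have : (j : ℝ) * S < a * S := by linarith
    exact_mod_cast lt_of_mul_lt_mul_right this hS.le
  refine .inl ⟨k + Q' + j * Q, by nlinarith, Eq.trans_lt (b := L - Int.fract x - j * S) ?_ ?_⟩
  · refine Int.fract_eq_iff.2 ⟨by linarith, by linarith, p' + j * p - ⌊x⌋, ?_⟩
    rw [← Int.self_sub_floor x, hx]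
    push_cast
    linear_combination hp' + j * hp
  · linarith

lemma succ_of_small (hS1 : S < 1) (ha : 1 ≤ a) (hQ : ∃ p : ℤ, σ * (Q * α) = p - S)
    {k : ℕ} (hk : k < Q') (ht : 1 - S ≤ Int.fract (σ * (c - k * α))) :
    InTwoTowers α (-σ) c (a * Q + Q') Q S T := by
  set x := σ * (c - k * α) with hx
  have hneg : -σ * (c - k * α) = -x := by ring
  have hfract : Int.fract (-x) = 1 - Int.fract x := Int.fract_neg (by linarith)
  rcases (show 1 - Int.fract x ≤ S by linarith).lt_or_eq with hlt | heq
  · exact .inl ⟨k, by nlinarith, by rwa [hneg, hfract]⟩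
  obtain ⟨p, hp⟩ := hQ
  refine .inl ⟨k + Q, by nlinarith, Eq.trans_lt (b := 0) ?_ (by linarith [Int.fract_lt_one x])⟩
  refine Int.fract_eq_iff.2 ⟨le_rfl, one_pos, p - 1 - ⌊x⌋, ?_⟩
  push_cast
  linear_combination hp + heq + Int.floor_add_fract x + hx

lemma succ (hS : 0 < S) (hS1 : S < 1) (ha : 1 ≤ a) (hL : L = a * S + T)
    (hQ' : ∃ p : ℤ, σ * (Q' * α) = p + L) (hQ : ∃ p : ℤ, σ * (Q * α) = p - S)
    (h : InTwoTowers α σ c Q Q' L S) : InTwoTowers α (-σ) c (a * Q + Q') Q S T := by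
  rcases h with ⟨k, hk, ht⟩ | ⟨k, hk, ht⟩
  · exact succ_of_large hS hS1 ha hL hQ' hQ hk ht
  · exact succ_of_small hS1 ha hQ hk ht

lemma exists_fract_sub_lt (hσ : σ = 1 ∨ σ = -1) (hSL : S < L) (hL1 : L ≤ 1)
    (hQ' : ∃ p : ℤ, σ * (Q' * α) = p + L) (hQ : ∃ p : ℤ, σ * (Q * α) = p - S)
    (h : InTwoTowers α σ c Q Q' L S) : ∃ k < Q + Q', Int.fract (c - k * α) < L := by
  obtain ⟨p', hp'⟩ := hQ'
  obtain ⟨p, hp⟩ := hQ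
  unfold InTwoTowers at h
  rcases hσ with rfl | rfl <;> simp only [one_mul, neg_one_mul] at h hp hp'
  · rcases h with ⟨k, hk, ht⟩ | ⟨k, hk, ht⟩
    · exact ⟨k, by omega, ht⟩
    -- as `Qα ≡ -S`, the arc `(kα - S, kα]` lies in `[(k + Q)α, (k + Q)α + L)`
    refine ⟨k + Q, by omega, Eq.trans_lt (b := Int.fract (c - k * α) + S - 1) ?_ ?_⟩
    · refine Int.fract_eq_iff.2 ⟨by linarith, by linarith [Int.fract_lt_one (c - k * α)],
        ⌊c - k * α⌋ - p + 1, ?_⟩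
      push_cast
      linear_combination -hp - Int.floor_add_fract (c - k * α)
    · linarith [Int.fract_lt_one (c - k * α)]
  · rcases h with ⟨k, hk, ht⟩ | ⟨k, hk, ht⟩
    · rcases eq_or_ne (Int.fract (c - k * α)) 0 with h0 | h0
      · exact ⟨k, by omega, h0 ▸ (Int.fract_nonneg _).trans_lt ht⟩
      rw [Int.fract_neg h0] at ht
      refine ⟨k + Q', by omega, Eq.trans_lt (b := Int.fract (c - k * α) + L - 1) ?_ ?_⟩
      · refine Int.fract_eq_iff.2 ⟨by linarith, by linarith [Int.fract_lt_one (c - k * α)],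
          ⌊c - k * α⌋ + p' + 1, ?_⟩
        push_cast
        linear_combination hp' - Int.floor_add_fract (c - k * α)
      · linarith [Int.fract_lt_one (c - k * α)]
    · have h0 : Int.fract (c - k * α) ≠ 0 := fun h0 => by
        rw [Int.fract_neg_eq_zero.2 h0] at ht
        linarith
      rw [Int.fract_neg h0] at ht
      exact ⟨k, by omega, by linarith⟩

end InTwoTowers

section ContinuedFraction

variable {α : ℝ}

lemma cfPair_invariant (hα : Irrational α) (hα0 : 0 < α) (hα1 : α < 1) (m : ℕ) :
    0 < (cfPair α m).2 ∧ (cfPair α m).2 < (cfPair α m).1 ∧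
      Irrational ((cfPair α m).1 / (cfPair α m).2) := by
  induction m with
  | zero => exact ⟨hα0, hα1, by simpa [cfPair, one_div] using hα.inv⟩
  | succ m ih =>
    obtain ⟨hpos, -, hirr⟩ := ih
    set r := (cfPair α m).1 / (cfPair α m).2
    have hfst : (cfPair α (m + 1)).1 = (cfPair α m).2 := rfl
    have hsnd : (cfPair α (m + 1)).2 = (cfPair α m).2 * Int.fract r := by
      simp only [cfPair, Int.fract, r]
      field_simp
    have hfract : Irrational (Int.fract r) := hirr.sub_intCast ⌊r⌋
    have hfract_pos : 0 < Int.fract r := (Int.fract_nonneg r).lt_of_ne' hfract.ne_zero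
    refine ⟨by rw [hsnd]; positivity, ?_, ?_⟩
    · rw [hsnd, hfst]
      exact mul_lt_of_lt_one_right hpos (Int.fract_lt_one r)
    · rw [hsnd, hfst, div_mul_cancel_left₀ hpos.ne']
      exact hfract.inv

lemma cfPair_fst_le_one (hα : Irrational α) (hα0 : 0 < α) (hα1 : α < 1) (m : ℕ) :
    (cfPair α m).1 ≤ 1 := by
  induction m with
  | zero => exact le_rfl
  | succ m ih => exact ((cfPair_invariant hα hα0 hα1 m).2.1.trans_le ih).le

lemma one_le_pq_succ (hα : Irrational α) (hα0 : 0 < α) (hα1 : α < 1) (m : ℕ) :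
    1 ≤ pq α (m + 1) := by
  obtain ⟨hpos, hlt, -⟩ := cfPair_invariant hα hα0 hα1 m
  have : 1 ≤ ⌊(cfPair α m).1 / (cfPair α m).2⌋ :=
    Int.le_floor.2 (by exact_mod_cast ((one_lt_div hpos).2 hlt).le)
  show 1 ≤ (⌊(cfPair α m).1 / (cfPair α m).2⌋).toNat
  omega

lemma cfPair_fst_eq (hα : Irrational α) (hα0 : 0 < α) (hα1 : α < 1) (m : ℕ) :
    (cfPair α m).1 = pq α (m + 1) * (cfPair α m).2 + (cfPair α (m + 1)).2 := by
  have hpq : (pq α (m + 1) : ℤ) = ⌊(cfPair α m).1 / (cfPair α m).2⌋ := by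
    have := one_le_pq_succ hα hα0 hα1 m
    simp only [pq, Nat.add_sub_cancel] at this ⊢
    omega
  simp only [cfPair]
  rw [← hpq]
  push_cast
  ring

/-- The classical `q_m α - p_m = (-1)^m α_m`, at `m - 1` and at `m`. -/
lemma exists_qPair_mul_eq (hα : Irrational α) (hα0 : 0 < α) (hα1 : α < 1) (m : ℕ) :
    (∃ p : ℤ, (-1) ^ (m + 1) * ((qPair α m).1 * α) = p + (cfPair α m).1) ∧
      ∃ p : ℤ, (-1) ^ (m + 1) * ((qPair α m).2 * α) = p - (cfPair α m).2 := by
  induction m with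
  | zero => exact ⟨⟨-1, by simp [qPair, cfPair]⟩, ⟨0, by simp [qPair, cfPair]⟩⟩
  | succ m ih =>
    obtain ⟨⟨p', hp'⟩, ⟨p, hp⟩⟩ := ih
    have hrec := cfPair_fst_eq hα hα0 hα1 m
    refine ⟨⟨-p, ?_⟩, ⟨-(pq α (m + 1) * p + p'), ?_⟩⟩
    · simp only [qPair, cfPair, pow_succ] at hp ⊢
      push_cast
      linear_combination -hp
    · simp only [qPair, pow_succ] at hp hp' ⊢
      push_cast
      linear_combination -(pq α (m + 1) : ℝ) * hp - hp' - hrec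

lemma inTwoTowers_cfPair (hα : Irrational α) (hα0 : 0 < α) (hα1 : α < 1) (m : ℕ) (c : ℝ) :
    InTwoTowers α ((-1) ^ (m + 1)) c (qPair α m).2 (qPair α m).1
      (cfPair α m).1 (cfPair α m).2 := by
  induction m with
  | zero => exact .inl ⟨0, by simp [qPair], by simpa [cfPair] using Int.fract_lt_one _⟩
  | succ m ih =>
    obtain ⟨hS, hSL, -⟩ := cfPair_invariant hα hα0 hα1 m
    obtain ⟨hQ', hQ⟩ := exists_qPair_mul_eq hα hα0 hα1 m
    rw [show (-1 : ℝ) ^ (m + 1 + 1) = -(-1) ^ (m + 1) by ring]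
    exact ih.succ hS (hSL.trans_le (cfPair_fst_le_one hα hα0 hα1 m))
      (one_le_pq_succ hα hα0 hα1 m) (cfPair_fst_eq hα hα0 hα1 m) hQ' hQ

lemma exists_fract_sub_lt_alphaSeq (hα : Irrational α) (hα0 : 0 < α) (hα1 : α < 1)
    (m : ℕ) (c : ℝ) :
    ∃ k < qDen α (m + 1) + qDen α m, Int.fract (c - k * α) < alphaSeq α m := by
  obtain ⟨hQ', hQ⟩ := exists_qPair_mul_eq hα hα0 hα1 (m + 1)
  exact (inTwoTowers_cfPair hα hα0 hα1 (m + 1) c).exists_fract_sub_lt (neg_one_pow_eq_or ℝ _)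
    (cfPair_invariant hα hα0 hα1 (m + 1)).2.1 (cfPair_fst_le_one hα hα0 hα1 (m + 1)) hQ' hQ

end ContinuedFraction

theorem stmt_5_general (α : ℝ) (hα : Irrational α) (hα0 : 0 < α) (hα1 : α < 1)
    (β' : ℝ) (n : ℕ) (y z : ℝ)
    (hz1 : alphaSeq α (n + 1) ≤ z) :
    ∃ k : ℕ, 0 < k ∧ Int.fract (β' - (y + (k : ℝ) * α)) < z ∧
      (∀ k' : ℕ, 0 < k' → Int.fract (β' - (y + (k' : ℝ) * α)) < z → k ≤ k') ∧
      k ≤ qDen α (n + 2) + qDen α (n + 1) + qDen α n := by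
  obtain ⟨k, hk, hfract⟩ : ∃ k < qDen α (n + 2) + qDen α (n + 1),
      Int.fract (β' - y - α - k * α) < alphaSeq α (n + 1) :=
    exists_fract_sub_lt_alphaSeq hα hα0 hα1 (n + 1) (β' - y - α)
  have hhit : 0 < k + 1 ∧ Int.fract (β' - (y + ((k + 1 : ℕ) : ℝ) * α)) < z := by
    refine ⟨k.succ_pos, Eq.trans_lt (congrArg Int.fract ?_) (hfract.trans_le hz1)⟩
    push_cast
    ring
  have hex : ∃ k : ℕ, 0 < k ∧ Int.fract (β' - (y + (k : ℝ) * α)) < z := ⟨k + 1, hhit⟩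
  refine ⟨Nat.find hex, (Nat.find_spec hex).1, (Nat.find_spec hex).2,
    fun k' hk' hfract' => Nat.find_min' hex ⟨hk', hfract'⟩, ?_⟩
  have hmin := Nat.find_min' hex hhit
  omega

theorem stmt_5 (α : ℝ) (hα : Irrational α) (hα0 : 0 < α) (hα1 : α < 1)
    (β β' : ℝ) (n : ℕ) (hn : 1 ≤ n) (x y z : ℝ)
    (hz1 : alphaSeq α (n + 1) ≤ z) (hz2 : z ≤ alphaSeq α n) (hxy : x = y + z)
    (hβin : Int.fract (β - y) < z) :
    ∃ k : ℕ, 0 < k ∧ Int.fract (β' - (y + (k : ℝ) * α)) < z ∧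
      (∀ k' : ℕ, 0 < k' → Int.fract (β' - (y + (k' : ℝ) * α)) < z → k ≤ k') ∧
      k ≤ qDen α (n + 2) + qDen α (n + 1) + qDen α n :=
  stmt_5_general α hα hα0 hα1 β' n y z hz1
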